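/- Let n ≥ 4 and let f be an automorphism of Γ(n) such that f(0,0) = (0,0), f(C₁) = C₁, f(C₂) = C₂ and f(C₃) = C₃ (setwise). Then there exists a unit u of the ring ℤ_n such that f = ψ_u, i.e., f(i,j) = (u·i, u·j) for all (i,j) ∈ ℤ_n × ℤ_n. -/

import Mathlib

/-- The connection set `S = {(i,0), (0,i), (i,i) : 1 ≤ i ≤ n-1}` of `ℤ_n × ℤ_n`. -/
def cayS (n : ℕ) : Set (ZMod n × ZMod n) :=
  {p | p ≠ 0 ∧ (p.2 = 0 ∨ p.1 = 0 ∨ p.1 = p.2)}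

/-- The Cayley graph `Γ(n) = Cay(ℤ_n × ℤ_n; S)`. -/
def Gamma (n : ℕ) : SimpleGraph (ZMod n × ZMod n) where
  Adj x y := x ≠ y ∧ x - y ∈ cayS n
  symm := by
    constructor
    rintro x y ⟨hxy, hne, h⟩
    refine ⟨Ne.symm hxy, sub_ne_zero_of_ne (Ne.symm hxy), ?_⟩
    simp only [Prod.fst_sub, Prod.snd_sub] at h ⊢
    rcases h with h | h | h
    · exact Or.inl (by linear_combination -h)
    · exact Or.inr (Or.inl (by linear_combination -h))
    · exact Or.inr (Or.inr (by linear_combination -h))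
  loopless := ⟨fun x h => h.1 rfl⟩

/-- `C₁ = {(i,0) : 1 ≤ i ≤ n-1}`. -/
def C1 (n : ℕ) : Set (ZMod n × ZMod n) := {p | p.2 = 0 ∧ p.1 ≠ 0}

/-- `C₂ = {(0,i) : 1 ≤ i ≤ n-1}`. -/
def C2 (n : ℕ) : Set (ZMod n × ZMod n) := {p | p.1 = 0 ∧ p.2 ≠ 0}

/-- `C₃ = {(i,i) : 1 ≤ i ≤ n-1}`. -/
def C3 (n : ℕ) : Set (ZMod n × ZMod n) := {p | p.1 = p.2 ∧ p.1 ≠ 0}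

/-- `ψ_u : (i,j) ↦ (u·i, u·j)` for a unit `u` of `ℤ_n`. -/
def psiMap (n : ℕ) (u : (ZMod n)ˣ) : ZMod n × ZMod n → ZMod n × ZMod n :=
  fun p => (u * p.1, u * p.2)

/-!
`Γ(n)` is the graph of the three parallel classes of lines (horizontal, vertical, diagonal)
of `ℤ_n × ℤ_n`, and `C₁, C₂, C₃` are the three lines through the origin with the origin removed.
Put `A i := (f (i, 0)).1`. Adjacency of `(i, 0)` with `(i, i)` and of `(0, j)` with `(j, j)`
transports `A` to the other two axes, and a point `(i, j)` off the axes is adjacent to both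
`(i, i)` and `(j, j)`, so `f (i, j)` is `(A i, A j)` or the swapped point `(A j, A i)`. Swapping
at `(i, j)` forces `A j = 2 A i`; a third point `(i, k)` of the same vertical line, which exists
once `n ≥ 4`, is then adjacent to `(i, j)` but can be neither swapped nor unswapped. Hence
`f = A × A`, the diagonal adjacency `(b, a + b) ~ (0, a)` makes `A` additive, so `A` is
multiplication by `A 1`, which is a unit because `f` is onto.
-/

open Function

theorem Function.Injective.apply_mem_iff_of_image_eq {α : Type*} {g : α → α}
    (hg : Injective g) {s : Set α} (h : g '' s = s) (a : α) : g a ∈ s ↔ a ∈ s := by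
  conv_lhs => rw [← h]
  exact hg.mem_set_image

theorem exists_ne_ne_ne_of_three_lt_card {α : Type*} [Fintype α] (h : 3 < Fintype.card α)
    (a b c : α) : ∃ d, d ≠ a ∧ d ≠ b ∧ d ≠ c := by
  classical
  obtain ⟨d, -, hd⟩ := Finset.exists_mem_notMem_of_card_lt_card
    (s := {a, b, c}) (t := Finset.univ) (Finset.card_le_three.trans_lt h)
  simp only [Finset.mem_insert, Finset.mem_singleton, not_or] at hd
  exact ⟨d, hd⟩

theorem ZMod.eq_mul_of_map_add {n : ℕ} {A : ZMod n → ZMod n}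
    (hA : ∀ a b, A (a + b) = A a + A b) (k : ZMod n) : A k = A 1 * k := by
  obtain ⟨m, rfl⟩ := ZMod.intCast_surjective k
  simpa [zsmul_eq_mul, mul_comm] using map_zsmul (AddMonoidHom.mk' A hA) m 1

namespace Gamma

variable {n : ℕ}

theorem adj_iff {x y : ZMod n × ZMod n} :
    (Gamma n).Adj x y ↔ x ≠ y ∧ (x.2 = y.2 ∨ x.1 = y.1 ∨ x.1 - y.1 = x.2 - y.2) := by
  change (x ≠ y ∧ x - y ∈ cayS n) ↔ _
  simp only [cayS, Set.mem_ofPred_eq, Prod.fst_sub, Prod.snd_sub, sub_eq_zero, ne_eq]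
  tauto

theorem adj_of_snd_eq {a a' : ZMod n} (b : ZMod n) (h : a ≠ a') :
    (Gamma n).Adj (a, b) (a', b) :=
  adj_iff.2 ⟨fun e => h (congrArg Prod.fst e), Or.inl rfl⟩

theorem adj_of_fst_eq (a : ZMod n) {b b' : ZMod n} (h : b ≠ b') :
    (Gamma n).Adj (a, b) (a, b') :=
  adj_iff.2 ⟨fun e => h (congrArg Prod.snd e), Or.inr (Or.inl rfl)⟩

theorem adj_of_sub_eq {a a' b b' : ZMod n} (ha : a ≠ a') (h : a - a' = b - b') :
    (Gamma n).Adj (a, b) (a', b') :=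
  adj_iff.2 ⟨fun e => ha (congrArg Prod.fst e), Or.inr (Or.inr h)⟩

variable (f : Gamma n ≃g Gamma n)

theorem map_adj {p q : ZMod n × ZMod n} {a b c d : ZMod n} (hpq : (Gamma n).Adj p q)
    (hp : f p = (a, b)) (hq : f q = (c, d)) : b = d ∨ a = c ∨ a - c = b - d := by
  have h := (adj_iff.1 (f.map_adj_iff.2 hpq)).2
  rwa [hp, hq] at h

def axisMap (i : ZMod n) : ZMod n := (f (i, 0)).1

theorem axisMap_zero (hf : f (0, 0) = (0, 0)) : axisMap f 0 = 0 := by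
  simp [axisMap, hf]

theorem apply_fst_axis (hf : f (0, 0) = (0, 0)) (hC1 : ∀ p, f p ∈ C1 n ↔ p ∈ C1 n)
    (i : ZMod n) : f (i, 0) = (axisMap f i, 0) := by
  refine Prod.ext rfl ?_
  rcases eq_or_ne i 0 with rfl | hi
  · simp [hf]
  · exact ((hC1 _).2 ⟨rfl, hi⟩).1

theorem axisMap_injective (hf : f (0, 0) = (0, 0)) (hC1 : ∀ p, f p ∈ C1 n ↔ p ∈ C1 n) :
    Injective (axisMap f) := fun a b h => by
  have hab : f (a, 0) = f (b, 0) := by rw [apply_fst_axis f hf hC1, apply_fst_axis f hf hC1, h]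
  exact congrArg Prod.fst (f.injective hab)

theorem axisMap_ne_zero (hf : f (0, 0) = (0, 0)) (hC1 : ∀ p, f p ∈ C1 n ↔ p ∈ C1 n)
    {i : ZMod n} (hi : i ≠ 0) : axisMap f i ≠ 0 := by
  rw [← axisMap_zero f hf]
  exact (axisMap_injective f hf hC1).ne hi

theorem apply_diag (hf : f (0, 0) = (0, 0)) (hC1 : ∀ p, f p ∈ C1 n ↔ p ∈ C1 n)
    (hC3 : ∀ p, f p ∈ C3 n ↔ p ∈ C3 n) (i : ZMod n) :
    f (i, i) = (axisMap f i, axisMap f i) := by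
  rcases eq_or_ne i 0 with rfl | hi
  · simp [hf, axisMap_zero f hf]
  obtain ⟨hd, hne⟩ := (hC3 (i, i)).2 ⟨rfl, hi⟩
  have hfi : f (i, i) = ((f (i, i)).1, (f (i, i)).1) := Prod.ext rfl hd.symm
  rcases map_adj f (adj_of_fst_eq i (Ne.symm hi)) (apply_fst_axis f hf hC1 i) hfi with h | h | h
  · exact absurd h.symm hne
  · rw [hfi, h]
  · exact absurd (by linear_combination h) (axisMap_ne_zero f hf hC1 hi)

theorem apply_snd_axis (hf : f (0, 0) = (0, 0)) (hC1 : ∀ p, f p ∈ C1 n ↔ p ∈ C1 n)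
    (hC2 : ∀ p, f p ∈ C2 n ↔ p ∈ C2 n) (hC3 : ∀ p, f p ∈ C3 n ↔ p ∈ C3 n) (j : ZMod n) :
    f (0, j) = (0, axisMap f j) := by
  rcases eq_or_ne j 0 with rfl | hj
  · simp [hf, axisMap_zero f hf]
  obtain ⟨h0, hne⟩ := (hC2 (0, j)).2 ⟨rfl, hj⟩
  have hfj : f (0, j) = (0, (f (0, j)).2) := Prod.ext h0 rfl
  rcases map_adj f (adj_of_snd_eq j (Ne.symm hj)) hfj (apply_diag f hf hC1 hC3 j) with h | h | h
  · rw [hfj, h]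
  · exact absurd h.symm (axisMap_ne_zero f hf hC1 hj)
  · exact absurd (by linear_combination -h) hne

theorem apply_fst_ne_snd (hf : f (0, 0) = (0, 0)) (hC3 : ∀ p, f p ∈ C3 n ↔ p ∈ C3 n)
    {i j : ZMod n} (hi : i ≠ 0) (hij : i ≠ j) : (f (i, j)).1 ≠ (f (i, j)).2 := by
  intro h
  rcases eq_or_ne (f (i, j)).1 0 with h0 | h0
  · have hfij : f (i, j) = f (0, 0) := by rw [hf]; exact Prod.ext h0 (h ▸ h0)
    exact hi (congrArg Prod.fst (f.injective hfij))
  · exact hij ((hC3 _).1 ⟨h, h0⟩).1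

theorem apply_eq_or_swap (hf : f (0, 0) = (0, 0)) (hC1 : ∀ p, f p ∈ C1 n ↔ p ∈ C1 n)
    (hC3 : ∀ p, f p ∈ C3 n ↔ p ∈ C3 n) {i j : ZMod n} (hi : i ≠ 0) (hij : i ≠ j) :
    f (i, j) = (axisMap f i, axisMap f j) ∨ f (i, j) = (axisMap f j, axisMap f i) := by
  obtain ⟨x, y, hxy⟩ : ∃ x y, f (i, j) = (x, y) := ⟨_, _, rfl⟩
  have hne : x ≠ y := by simpa [hxy] using apply_fst_ne_snd f hf hC3 hi hij
  have hA : axisMap f i ≠ axisMap f j := (axisMap_injective f hf hC1).ne hij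
  have hdiag_i := map_adj f (adj_of_fst_eq i (Ne.symm hij)) hxy (apply_diag f hf hC1 hC3 i)
  have hdiag_j := map_adj f (adj_of_snd_eq j hij) hxy (apply_diag f hf hC1 hC3 j)
  rw [hxy]
  grind

theorem two_mul_of_apply_eq_swap (hf : f (0, 0) = (0, 0)) (hC1 : ∀ p, f p ∈ C1 n ↔ p ∈ C1 n)
    {i j : ZMod n} (hi : i ≠ 0) (hj : j ≠ 0) (hij : i ≠ j)
    (hswap : f (i, j) = (axisMap f j, axisMap f i)) : axisMap f j = 2 * axisMap f i := by
  rcases map_adj f (adj_of_fst_eq i hj) hswap (apply_fst_axis f hf hC1 i) with h | h | h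
  · exact absurd h (axisMap_ne_zero f hf hC1 hi)
  · exact absurd (axisMap_injective f hf hC1 h).symm hij
  · linear_combination h

theorem apply_of_ne (hn : 4 ≤ n) (hf : f (0, 0) = (0, 0))
    (hC1 : ∀ p, f p ∈ C1 n ↔ p ∈ C1 n) (hC3 : ∀ p, f p ∈ C3 n ↔ p ∈ C3 n) {i j : ZMod n}
    (hi : i ≠ 0) (hj : j ≠ 0) (hij : i ≠ j) : f (i, j) = (axisMap f i, axisMap f j) := by
  have : NeZero n := ⟨by omega⟩
  obtain ⟨k, hk0, hki, hkj⟩ :=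
    exists_ne_ne_ne_of_three_lt_card (by rw [ZMod.card]; omega) (0 : ZMod n) i j
  have hA := axisMap_injective f hf hC1
  refine (apply_eq_or_swap f hf hC1 hC3 hi hij).resolve_right fun hswap => ?_
  have hAj := two_mul_of_apply_eq_swap f hf hC1 hi hj hij hswap
  rcases apply_eq_or_swap f hf hC1 hC3 hi (Ne.symm hki) with hk | hk
  · rcases map_adj f (adj_of_fst_eq i (Ne.symm hkj)) hswap hk with h | h | h
    · exact hki (hA h).symm
    · exact hij (hA h).symm
    · exact axisMap_ne_zero f hf hC1 hk0 (by linear_combination h - hAj)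
  · exact hkj (hA ((two_mul_of_apply_eq_swap f hf hC1 hi hk0 (Ne.symm hki) hk).trans hAj.symm))

theorem apply_eq (hn : 4 ≤ n) (hf : f (0, 0) = (0, 0)) (hC1 : ∀ p, f p ∈ C1 n ↔ p ∈ C1 n)
    (hC2 : ∀ p, f p ∈ C2 n ↔ p ∈ C2 n) (hC3 : ∀ p, f p ∈ C3 n ↔ p ∈ C3 n) (i j : ZMod n) :
    f (i, j) = (axisMap f i, axisMap f j) := by
  rcases eq_or_ne j 0 with rfl | hj
  · rw [apply_fst_axis f hf hC1, axisMap_zero f hf]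
  rcases eq_or_ne i 0 with rfl | hi
  · rw [apply_snd_axis f hf hC1 hC2 hC3, axisMap_zero f hf]
  rcases eq_or_ne i j with rfl | hij
  · exact apply_diag f hf hC1 hC3 i
  · exact apply_of_ne f hn hf hC1 hC3 hi hj hij

theorem map_add_of_apply_eq (hf : f (0, 0) = (0, 0)) {A : ZMod n → ZMod n}
    (hA : ∀ i j, f (i, j) = (A i, A j)) (a b : ZMod n) : A (a + b) = A a + A b := by
  have hA0 : A 0 = 0 := by simpa [hA] using hf
  have hAinj : Injective A := fun x y h =>
    congrArg Prod.fst (f.injective ((hA x 0).trans (by rw [h, ← hA])))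
  rcases eq_or_ne b 0 with rfl | hb
  · simp [hA0]
  rcases map_adj f (adj_of_sub_eq hb (by ring) : (Gamma n).Adj (b, a + b) (0, a)) (hA _ _)
    (hA _ _) with h | h | h
  · exact absurd (by simpa using hAinj h) hb
  · exact absurd (hAinj h) hb
  · linear_combination -h - hA0

end Gamma

/-- If an automorphism `f` of `Γ(n)` fixes `(0,0)` and stabilizes each
of `C₁`, `C₂`, `C₃` setwise, then `f = ψ_u` for some unit `u` of `ℤ_n`. -/
theorem Gamma_aut_fixing_cliques_is_psi (n : ℕ) (hn : 4 ≤ n) (f : Gamma n ≃g Gamma n)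
    (hf : f (0, 0) = (0, 0)) (h1 : ⇑f '' C1 n = C1 n) (h2 : ⇑f '' C2 n = C2 n)
    (h3 : ⇑f '' C3 n = C3 n) :
    ∃ u : (ZMod n)ˣ, ∀ p : ZMod n × ZMod n, f p = psiMap n u p := by
  have hA := Gamma.apply_eq f hn hf (f.injective.apply_mem_iff_of_image_eq h1)
    (f.injective.apply_mem_iff_of_image_eq h2) (f.injective.apply_mem_iff_of_image_eq h3)
  have hmul := ZMod.eq_mul_of_map_add (Gamma.map_add_of_apply_eq f hf hA)
  obtain ⟨p, hp⟩ := f.surjective (0, 1)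
  have hu : Gamma.axisMap f 1 * p.2 = 1 := by
    rw [← hmul]
    exact congrArg Prod.snd ((hA p.1 p.2).symm.trans hp)
  refine ⟨Units.mkOfMulEqOne _ _ hu, fun ⟨i, j⟩ => ?_⟩
  rw [hA, psiMap, Units.val_mkOfMulEqOne, hmul i, hmul j]
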